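/- arXiv:2502.10759 — 3 statements merged into one kernel-verified Lean document; each statement's English description precedes it below -/
import Mathlib

section
/- Let φ be a continuous flow on a compact metric space X, let x₀ ∈ X, and let g : ℝ → ℝ be continuous with g(t) > τ + t for all t ≥ 0 for some τ > 0, satisfying d(φ_t(x₀), φ_{g(t)}(x₀)) → 0 as t → +∞. If liminf_{t→+∞}(g(t) − t) < ∞, then the ω-limit set of x₀ contains a point p and a time s ≥ τ with φ_s(p) = p; in particular ω(x₀) contains a periodic point. -/
open Filter

theorem spiral_bounded_liminf_periodic
    {X : Type*} [MetricSpace X] [CompactSpace X]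
    (φ : ℝ → X → X)
    (hcont : Continuous fun p : ℝ × X => φ p.1 p.2)
    (h0 : ∀ x, φ 0 x = x)
    (hadd : ∀ t s : ℝ, ∀ x, φ (t + s) x = φ s (φ t x))
    (x₀ : X) (τ : ℝ) (hτ : 0 < τ) (g : ℝ → ℝ) (hg : Continuous g)
    (hgap : ∀ t : ℝ, 0 ≤ t → τ + t < g t)
    (hspiral : Tendsto (fun t => dist (φ t x₀) (φ (g t) x₀)) atTop (nhds 0))
    (hliminf : liminf (fun t : ℝ => ((g t - t : ℝ) : EReal)) atTop < ⊤) :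
    ∃ p ∈ {z : X | ∃ t : ℕ → ℝ, Tendsto t atTop atTop ∧
        Tendsto (fun k => φ (t k) x₀) atTop (nhds z)},
      ∃ s : ℝ, τ ≤ s ∧ φ s p = p := by
  -- extract a real bound r with frequently g t - t < r
  obtain ⟨c, hc1, hc2⟩ := exists_between hliminf
  have hcne : c ≠ ⊤ := hc2.ne
  have hcnb : c ≠ ⊥ := fun h => by simp [h] at hc1
  lift c to ℝ using ⟨hcne, hcnb⟩
  have hfreq : ∃ᶠ u in atTop, ((g u - u : ℝ) : EReal) < (c : EReal) :=
    frequently_lt_of_liminf_lt (h := hc1)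
  have hfreq' : ∃ᶠ u in atTop, g u - u < c := by
    refine hfreq.mono fun u hu => ?_
    exact_mod_cast hu
  have hseq : ∀ k : ℕ, ∃ u : ℝ, (k : ℝ) ≤ u ∧ g u - u < c := fun k =>
    frequently_atTop.mp hfreq' (k : ℝ)
  choose t ht hlt using hseq
  have htt : Tendsto t atTop atTop :=
    tendsto_atTop_mono ht tendsto_natCast_atTop_atTop
  have htnn : ∀ k, (0 : ℝ) ≤ t k := fun k => le_trans (by positivity) (ht k)
  have hmem : ∀ k, ((g (t k) - t k, φ (t k) x₀) : ℝ × X) ∈ (Set.Icc τ c) ×ˢ Set.univ := by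
    intro k
    refine ⟨⟨?_, (hlt k).le⟩, trivial⟩
    show τ ≤ g (t k) - t k
    have := hgap (t k) (htnn k)
    linarith
  obtain ⟨⟨s, p⟩, hsp, ψ, hψ, hconv⟩ :=
    (isCompact_Icc.prod isCompact_univ).tendsto_subseq hmem
  have hconv1 : Tendsto (fun k => g (t (ψ k)) - t (ψ k)) atTop (nhds s) :=
    (continuous_fst.tendsto _).comp hconv
  have hconv2 : Tendsto (fun k => φ (t (ψ k)) x₀) atTop (nhds p) :=
    (continuous_snd.tendsto _).comp hconv
  have httψ : Tendsto (fun k => t (ψ k)) atTop atTop :=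
    htt.comp hψ.tendsto_atTop
  refine ⟨p, ⟨fun k => t (ψ k), httψ, hconv2⟩, s, hsp.1.1, ?_⟩
  -- the image orbit converges to φ s p
  have hA : Tendsto (fun k => φ (g (t (ψ k))) x₀) atTop (nhds (φ s p)) := by
    have h1 : Tendsto (fun k => φ (g (t (ψ k)) - t (ψ k)) (φ (t (ψ k)) x₀))
        atTop (nhds (φ s p)) := (hcont.tendsto (s, p)).comp hconv
    refine h1.congr fun k => ?_
    have := hadd (t (ψ k)) (g (t (ψ k)) - t (ψ k)) x₀
    rw [show t (ψ k) + (g (t (ψ k)) - t (ψ k)) = g (t (ψ k)) by ring] at this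
    exact this.symm
  -- it also converges to p via the spiral hypothesis
  have hB : Tendsto (fun k => φ (g (t (ψ k))) x₀) atTop (nhds p) := by
    refine hconv2.congr_dist ?_
    exact hspiral.comp httψ
  exact tendsto_nhds_unique hA hB
end

section
/- Let φ be an expansive continuous flow on a compact metric space X. Then for every T > 0, the set of periodic orbits of φ with period at most T is finite. -/
/-!
Two periodic orbits whose base points and periods are both close are shadowed by one another
under the linear time change `t ↦ (q / p) t`: by periodicity it suffices to compare them over one
period, where uniform continuity of the flow on `[0, T] × X` applies. Expansiveness then puts
them on the same orbit. Hence the orbit is a uniformly locally constant function of the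
(base point, period) pair, which ranges over a subset of the compact set `X × [0, T]`, so it
takes only finitely many values.
-/

def IsRep (h : ℝ → ℝ) : Prop :=
  StrictMono h ∧ Function.Surjective h ∧ h 0 = 0

def IsExpansive {X : Type*} [MetricSpace X] (φ : ℝ → X → X) : Prop :=
  ∀ ε : ℝ, 0 < ε → ∃ δ : ℝ, 0 < δ ∧ ∀ x y : X, ∀ h : ℝ → ℝ, IsRep h →
    (∀ t : ℝ, dist (φ t x) (φ (h t) y) ≤ δ) →
    ∃ s : ℝ, |s| ≤ ε ∧ y = φ s x

open Set Metric

theorem TotallyBounded.finite_image_of_dist_lt_imp_eq {α β : Type*} [PseudoMetricSpace α]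
    {K : Set α} (hK : TotallyBounded K) (F : α → β) {η : ℝ} (hη : 0 < η)
    (hF : ∀ a ∈ K, ∀ b ∈ K, dist a b < η → F a = F b) : (F '' K).Finite := by
  obtain ⟨t, htK, htfin, hcover⟩ := finite_approx_of_totallyBounded hK η hη
  refine (htfin.image F).subset ?_
  rintro _ ⟨a, haK, rfl⟩
  obtain ⟨c, hct, hac⟩ := mem_iUnion₂.mp (hcover haK)
  exact ⟨c, hct, (hF a haK c (htK hct) hac).symm⟩

theorem isRep_const_mul {c : ℝ} (hc : 0 < c) : IsRep (c * ·) :=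
  ⟨strictMono_mul_left_of_pos hc, fun r => ⟨r / c, mul_div_cancel₀ r hc.ne'⟩, mul_zero c⟩

section Flow

variable {X : Type*} {φ : ℝ → X → X}

theorem periodic_orbit_of_apply_eq (hadd : ∀ t s : ℝ, ∀ x, φ (t + s) x = φ s (φ t x))
    {x : X} {p : ℝ} (hpx : φ p x = x) : Function.Periodic (fun t => φ t x) p := fun t => by
  simp only [add_comm t, hadd, hpx]

theorem range_orbit_eq_of_eq_flow (hadd : ∀ t s : ℝ, ∀ x, φ (t + s) x = φ s (φ t x))
    {x y : X} {s : ℝ} (hs : y = φ s x) : range (fun t => φ t y) = range (fun t => φ t x) := by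
  subst hs
  ext z
  constructor
  · rintro ⟨t, rfl⟩
    exact ⟨s + t, hadd s t x⟩
  · rintro ⟨t, rfl⟩
    exact ⟨t - s, show φ (t - s) (φ s x) = φ t x by rw [← hadd, add_sub_cancel]⟩

theorem exists_pos_dist_flow_lt [PseudoMetricSpace X] [CompactSpace X]
    (hcont : Continuous fun p : ℝ × X => φ p.1 p.2) (T : ℝ) {δ : ℝ} (hδ : 0 < δ) :
    ∃ η > 0, ∀ s ∈ Icc 0 T, ∀ t ∈ Icc 0 T, ∀ x y : X,
      |s - t| < η → dist x y < η → dist (φ s x) (φ t y) < δ := by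
  obtain ⟨η, hη, hφ⟩ := uniformContinuousOn_iff.mp
    ((isCompact_Icc.prod isCompact_univ).uniformContinuousOn_of_continuous hcont.continuousOn) δ hδ
  refine ⟨η, hη, fun s hs t ht x y hst hxy => hφ (s, x) ⟨hs, trivial⟩ (t, y) ⟨ht, trivial⟩ ?_⟩
  rw [Prod.dist_eq, Real.dist_eq]
  exact max_lt hst hxy

theorem exists_pos_dist_periodic_orbit_lt [PseudoMetricSpace X] [CompactSpace X]
    (hcont : Continuous fun p : ℝ × X => φ p.1 p.2)
    (hadd : ∀ t s : ℝ, ∀ x, φ (t + s) x = φ s (φ t x)) (T : ℝ) {δ : ℝ} (hδ : 0 < δ) :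
    ∃ η > 0, ∀ (x y : X) (p q : ℝ), 0 < p → p ≤ T → 0 < q → q ≤ T → φ p x = x → φ q y = y →
      dist x y < η → |p - q| < η → ∀ t, dist (φ t x) (φ (q / p * t) y) < δ := by
  obtain ⟨η, hη, hφ⟩ := exists_pos_dist_flow_lt hcont T hδ
  refine ⟨η, hη, fun x y p q hp hpT hq hqT hpx hqy hxy hpq t => ?_⟩
  have hy := (periodic_orbit_of_apply_eq hadd hqy).const_mul (q / p)
  rw [inv_div, div_mul_cancel₀ _ hq.ne'] at hy
  have hper : Function.Periodic (fun t => dist (φ t x) (φ (q / p * t) y)) p := fun t => by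
    simp only [periodic_orbit_of_apply_eq hadd hpx t, hy t]
  obtain ⟨t₀, ⟨ht₀, ht₀p⟩, heq⟩ := hper.exists_mem_Ico₀ hp t
  rw [heq]
  have hshift : |t₀ - q / p * t₀| ≤ |p - q| := by
    rw [show t₀ - q / p * t₀ = (p - q) * (t₀ / p) by field_simp, abs_mul,
      abs_of_nonneg (div_nonneg ht₀ hp.le)]
    exact mul_le_of_le_one_right (abs_nonneg _) ((div_le_one hp).mpr ht₀p.le)
  have hreparam : q / p * t₀ ≤ q :=
    calc q / p * t₀ ≤ q / p * p := by gcongr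
      _ = q := div_mul_cancel₀ q hp.ne'
  exact hφ t₀ ⟨ht₀, by linarith⟩ (q / p * t₀) ⟨by positivity, by linarith⟩ x y
    (hshift.trans_lt hpq) hxy

theorem IsExpansive.exists_pos_range_orbit_eq [MetricSpace X] [CompactSpace X]
    (hexp : IsExpansive φ) (hcont : Continuous fun p : ℝ × X => φ p.1 p.2)
    (hadd : ∀ t s : ℝ, ∀ x, φ (t + s) x = φ s (φ t x)) (T : ℝ) :
    ∃ η > 0, ∀ (x y : X) (p q : ℝ), 0 < p → p ≤ T → 0 < q → q ≤ T → φ p x = x → φ q y = y →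
      dist x y < η → |p - q| < η → range (fun t => φ t y) = range (fun t => φ t x) := by
  obtain ⟨δ, hδ, hexpδ⟩ := hexp 1 one_pos
  obtain ⟨η, hη, hshadow⟩ := exists_pos_dist_periodic_orbit_lt hcont hadd T hδ
  refine ⟨η, hη, fun x y p q hp hpT hq hqT hpx hqy hxy hpq => ?_⟩
  obtain ⟨s, -, hs⟩ := hexpδ x y _ (isRep_const_mul (div_pos hq hp))
    fun t => (hshadow x y p q hp hpT hq hqT hpx hqy hxy hpq t).le
  exact range_orbit_eq_of_eq_flow hadd hs

end Flow

theorem expansive_finitely_many_short_periodic_orbits_general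
    {X : Type*} [MetricSpace X] [CompactSpace X]
    (φ : ℝ → X → X)
    (hcont : Continuous fun p : ℝ × X => φ p.1 p.2)
    (hadd : ∀ t s : ℝ, ∀ x, φ (t + s) x = φ s (φ t x))
    (hexp : IsExpansive φ) (T : ℝ) :
    {O : Set X | ∃ (x : X) (p : ℝ), O = Set.range (fun t : ℝ => φ t x) ∧
      0 < p ∧ p ≤ T ∧ φ p x = x ∧
      ∀ q : ℝ, 0 < q → φ q x = x → p ≤ q}.Finite := by
  obtain ⟨η, hη, hsame⟩ := hexp.exists_pos_range_orbit_eq hcont hadd T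
  set P : Set (X × ℝ) := {a | 0 < a.2 ∧ a.2 ≤ T ∧ φ a.2 a.1 = a.1 ∧
    ∀ q : ℝ, 0 < q → φ q a.1 = a.1 → a.2 ≤ q}
  have hPK : P ⊆ univ ×ˢ Icc 0 T := fun a ha => ⟨mem_univ _, ha.1.le, ha.2.1⟩
  have hP : TotallyBounded P := (isCompact_univ.prod isCompact_Icc).totallyBounded.subset hPK
  refine (hP.finite_image_of_dist_lt_imp_eq (fun a => range fun t => φ t a.1) hη ?_).subset ?_
  · rintro ⟨x, p⟩ ⟨hp, hpT, hpx, -⟩ ⟨y, q⟩ ⟨hq, hqT, hqy, -⟩ hd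
    rw [Prod.dist_eq, Real.dist_eq, max_lt_iff] at hd
    exact (hsame x y p q hp hpT hq hqT hpx hqy hd.1 hd.2).symm
  · rintro O ⟨x, p, rfl, hp⟩
    exact ⟨(x, p), hp, rfl⟩

theorem expansive_finitely_many_short_periodic_orbits
    {X : Type*} [MetricSpace X] [CompactSpace X]
    (φ : ℝ → X → X)
    (hcont : Continuous fun p : ℝ × X => φ p.1 p.2)
    (h0 : ∀ x, φ 0 x = x)
    (hadd : ∀ t s : ℝ, ∀ x, φ (t + s) x = φ s (φ t x))
    (hexp : IsExpansive φ) (T : ℝ) (hT : 0 < T) :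
    {O : Set X | ∃ (x : X) (p : ℝ), O = Set.range (fun t : ℝ => φ t x) ∧
      0 < p ∧ p ≤ T ∧ φ p x = x ∧
      ∀ q : ℝ, 0 < q → φ q x = x → p ≤ q}.Finite :=
  expansive_finitely_many_short_periodic_orbits_general φ hcont hadd hexp T
end

section
/- Let φ be a continuous flow on a compact metric space X. If x is a spiral point, i.e., there exist τ > 0 and a continuous g : ℝ → ℝ with g(t) > τ + t for all t ≥ 0 and d(φ_t(x), φ_{g(t)}(x)) → 0 as t → +∞, then every point φ_s(x), s ≥ 0, on the forward orbit of x is also a spiral point. -/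
open Filter

theorem forward_orbit_of_spiral_is_spiral
    {X : Type*} [MetricSpace X] [CompactSpace X]
    (φ : ℝ → X → X)
    (hcont : Continuous fun p : ℝ × X => φ p.1 p.2)
    (h0 : ∀ x, φ 0 x = x)
    (hadd : ∀ t s : ℝ, ∀ x, φ (t + s) x = φ s (φ t x))
    (x : X)
    (hspiral : ∃ (τ : ℝ) (g : ℝ → ℝ), 0 < τ ∧ Continuous g ∧
      (∀ t : ℝ, 0 ≤ t → τ + t < g t) ∧
      Tendsto (fun t => dist (φ t x) (φ (g t) x)) atTop (nhds 0))
    (s : ℝ) (hs : 0 ≤ s) :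
    ∃ (τ : ℝ) (g : ℝ → ℝ), 0 < τ ∧ Continuous g ∧
      (∀ t : ℝ, 0 ≤ t → τ + t < g t) ∧
      Tendsto (fun t => dist (φ t (φ s x)) (φ (g t) (φ s x))) atTop (nhds 0) := by
  obtain ⟨τ, g, hτ, hg, hgt, htend⟩ := hspiral
  refine ⟨τ, fun t => g (s + t) - s, hτ, by continuity, ?_, ?_⟩
  · intro t ht
    have := hgt (s + t) (by linarith)
    show τ + t < g (s + t) - s
    linarith
  · have key : ∀ t : ℝ, dist (φ t (φ s x)) (φ (g (s + t) - s) (φ s x))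
        = dist (φ (s + t) x) (φ (g (s + t)) x) := by
      intro t
      rw [← hadd s t x, ← hadd s (g (s + t) - s) x]
      ring_nf
    simp only [key]
    exact htend.comp (tendsto_atTop_add_const_left atTop s tendsto_id)
end
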